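/- arXiv:2406.10369 — 2 statements merged into one kernel-verified Lean document; each statement's English description precedes it below -/
import Mathlib

section
/- Let IOD graphs G and G' both be partially informative and both satisfy the no dangling nodes condition. Then any crossover child produced from an input-contiguous IO partition (Ψ,Ω) of input parent G and an output-contiguous IO partition (Ψ',Ω') of output parent G' (the partitions being crossover compatible) is partially informative: the child contains a directed path from some input in I to some output in O'. -/
/-!
A path of `G` from an input to an output starts in `Ψ` and ends in `Ω`, so it crosses a forward
link `f`. In the child, contiguity of `Ψ` leads from an input to the source of `f` inside `Ψ`, the
membrane edge of `f` leads to the head of `g f` in `Ω'`, and contiguity of `Ω'` leads on to an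
output of `G'` inside `Ω'`.
-/

/-- An Input/Output Directed (IOD) graph: a set of nodes `N` inside a common
vertex type `V`, a set of directed edges `E ⊆ N × N`, and disjoint subsets
`I, O ⊆ N` (inputs and outputs) such that no edge ends at a node of `I`
and no edge starts at a node of `O`. -/
structure IODGraph (V : Type) where
  N : Set V
  E : Set (V × V)
  I : Set V
  O : Set V
  I_sub : I ⊆ N
  O_sub : O ⊆ N
  disjIO : Disjoint I O
  E_mem : ∀ e ∈ E, e.1 ∈ N ∧ e.2 ∈ N
  no_into_I : ∀ e ∈ E, e.2 ∉ I
  no_outof_O : ∀ e ∈ E, e.1 ∉ O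

namespace IODGraph

variable {V : Type}

/-- `G.Reach a b`: there is a directed path (possibly trivial) from `a` to `b` in `G`. -/
def Reach (G : IODGraph V) : V → V → Prop :=
  Relation.ReflTransGen (fun x y => (x, y) ∈ G.E)

/-- Reachability by a directed path lying entirely within the set `S`. -/
def ReachWithin (G : IODGraph V) (S : Set V) : V → V → Prop :=
  Relation.ReflTransGen (fun x y => (x, y) ∈ G.E ∧ x ∈ S ∧ y ∈ S)

/-- `n` lies on a directed path from some input to some output. -/
def OnIOPath (G : IODGraph V) (n : V) : Prop :=
  ∃ i ∈ G.I, ∃ o ∈ G.O, G.Reach i n ∧ G.Reach n o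

/-- The no dangling nodes condition: every intermediate node lies on a
directed path from some input to some output. -/
def NoDangling (G : IODGraph V) : Prop :=
  ∀ n ∈ G.N \ (G.I ∪ G.O), G.OnIOPath n

/-- Partially informative: a path from some input to some output. -/
def PartiallyInformative (G : IODGraph V) : Prop :=
  ∃ i ∈ G.I, ∃ o ∈ G.O, G.Reach i o

/-- Very informative: from every input there is a path to some output. -/
def VeryInformative (G : IODGraph V) : Prop :=
  ∀ i ∈ G.I, ∃ o ∈ G.O, G.Reach i o

/-- Fully informative: for every input and every output there is a path. -/
def FullyInformative (G : IODGraph V) : Prop :=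
  ∀ i ∈ G.I, ∀ o ∈ G.O, G.Reach i o

/-- Non-informative: no path from any input to any output. -/
def NonInformative (G : IODGraph V) : Prop :=
  ∀ i ∈ G.I, ∀ o ∈ G.O, ¬ G.Reach i o

/-- Partially actionable: a path from some input to some output. -/
def PartiallyActionable (G : IODGraph V) : Prop :=
  ∃ i ∈ G.I, ∃ o ∈ G.O, G.Reach i o

/-- Very actionable: for every output there is a path from some input to it. -/
def VeryActionable (G : IODGraph V) : Prop :=
  ∀ o ∈ G.O, ∃ i ∈ G.I, G.Reach i o

/-- Fully actionable: for every input and every output there is a path. -/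
def FullyActionable (G : IODGraph V) : Prop :=
  ∀ i ∈ G.I, ∀ o ∈ G.O, G.Reach i o

/-- An IO partition `(Ψ, Ω)` of the node set of `G`, with `I ⊆ Ψ` and `O ⊆ Ω`. -/
structure IOPartition (G : IODGraph V) where
  Psi : Set V
  Om : Set V
  union_eq : Psi ∪ Om = G.N
  disj : Disjoint Psi Om
  I_sub : G.I ⊆ Psi
  O_sub : G.O ⊆ Om

/-- Forward links of an IO partition: edges from `Ψ` to `Ω`. -/
def Fwd (G : IODGraph V) (P : IOPartition G) : Set (V × V) :=
  {e | e ∈ G.E ∧ e.1 ∈ P.Psi ∧ e.2 ∈ P.Om}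

/-- Backward links of an IO partition: edges from `Ω` to `Ψ`. -/
def Bwd (G : IODGraph V) (P : IOPartition G) : Set (V × V) :=
  {e | e ∈ G.E ∧ e.1 ∈ P.Om ∧ e.2 ∈ P.Psi}

/-- The input part `Ψ` is contiguous: every non-input node of `Ψ` is reached
from some input by a path inside `Ψ`. -/
def InputContiguous (G : IODGraph V) (P : IOPartition G) : Prop :=
  ∀ n ∈ P.Psi \ G.I, ∃ i ∈ G.I, G.ReachWithin P.Psi i n

/-- The output part `Ω` is contiguous: every non-output node of `Ω` reaches
some output by a path inside `Ω`. -/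
def OutputContiguous (G : IODGraph V) (P : IOPartition G) : Prop :=
  ∀ n ∈ P.Om \ G.O, ∃ o ∈ G.O, G.ReachWithin P.Om n o

/-- Crossover compatibility of two IOD graphs with chosen IO partitions. -/
structure CrossCompat (G G' : IODGraph V) (P : IOPartition G) (P' : IOPartition G') : Prop where
  psi_om' : P.Psi ∩ P'.Om = ∅
  psi'_om : P'.Psi ∩ P.Om = ∅
  finF : (Fwd G P).Finite
  finF' : (Fwd G' P').Finite
  finB : (Bwd G P).Finite
  finB' : (Bwd G' P').Finite
  cardF : (Fwd G P).ncard = (Fwd G' P').ncard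
  cardB : (Bwd G P).ncard = (Bwd G' P').ncard

/-- The crossover membrane induced by bijections `g : F(Ψ,Ω) ≃ F(Ψ',Ω')` and
`h : B(Ψ',Ω') ≃ B(Ψ,Ω)`: the edges `(source of f, destination of g f)` for
forward links `f`, and `(source of b', destination of h b')` for backward
links `b'` of the output parent. -/
def membraneEdges (G G' : IODGraph V) (P : IOPartition G) (P' : IOPartition G')
    (g : Fwd G P ≃ Fwd G' P') (h : Bwd G' P' ≃ Bwd G P) : Set (V × V) :=
  (Set.range fun f : Fwd G P => ((f : V × V).1, (g f : V × V).2)) ∪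
  (Set.range fun b' : Bwd G' P' => ((b' : V × V).1, (h b' : V × V).2))

/-- The edge set of the crossover child: edges of `G` within `Ψ`, edges of `G'`
within `Ω'`, and the crossover membrane. -/
def childEdges (G G' : IODGraph V) (P : IOPartition G) (P' : IOPartition G')
    (g : Fwd G P ≃ Fwd G' P') (h : Bwd G' P' ≃ Bwd G P) : Set (V × V) :=
  {e | e ∈ G.E ∧ e.1 ∈ P.Psi ∧ e.2 ∈ P.Psi} ∪
  {e | e ∈ G'.E ∧ e.1 ∈ P'.Om ∧ e.2 ∈ P'.Om} ∪
  membraneEdges G G' P P' g h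

/-- Reachability (directed paths) in the crossover child. -/
def childReach (G G' : IODGraph V) (P : IOPartition G) (P' : IOPartition G')
    (g : Fwd G P ≃ Fwd G' P') (h : Bwd G' P' ≃ Bwd G P) : V → V → Prop :=
  Relation.ReflTransGen (fun x y => (x, y) ∈ childEdges G G' P P' g h)

end IODGraph

open IODGraph

namespace IODGraph

variable {V : Type} {G G' : IODGraph V} {P : IOPartition G} {P' : IOPartition G'}

theorem Reach.fwd_nonempty {a b : V} (hab : G.Reach a b) (ha : a ∈ P.Psi) (hb : b ∈ P.Om) :
    (Fwd G P).Nonempty := by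
  induction hab using Relation.ReflTransGen.head_induction_on with
  | refl => exact absurd hb (Set.disjoint_left.mp P.disj ha)
  | @head x c hxc _ ih =>
    have hc : c ∈ P.Psi ∪ P.Om := P.union_eq ▸ (G.E_mem _ hxc).2
    rcases hc with hc | hc
    · exact ih hc
    · exact ⟨(x, c), hxc, ha, hc⟩

theorem PartiallyInformative.fwd_nonempty (hG : G.PartiallyInformative) (P : IOPartition G) :
    (Fwd G P).Nonempty :=
  let ⟨_, hi, _, ho, hio⟩ := hG
  hio.fwd_nonempty (P.I_sub hi) (P.O_sub ho)

theorem InputContiguous.exists_reachWithin (hIC : InputContiguous G P) {n : V}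
    (hn : n ∈ P.Psi) : ∃ i ∈ G.I, G.ReachWithin P.Psi i n := by
  by_cases hnI : n ∈ G.I
  · exact ⟨n, hnI, .refl⟩
  · exact hIC n ⟨hn, hnI⟩

theorem OutputContiguous.exists_reachWithin (hOC : OutputContiguous G P) {n : V}
    (hn : n ∈ P.Om) : ∃ o ∈ G.O, G.ReachWithin P.Om n o := by
  by_cases hnO : n ∈ G.O
  · exact ⟨n, hnO, .refl⟩
  · exact hOC n ⟨hn, hnO⟩

section Child

variable {g : Fwd G P ≃ Fwd G' P'} {h : Bwd G' P' ≃ Bwd G P}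

theorem childReach_of_reachWithin_psi {a b : V} (hab : G.ReachWithin P.Psi a b) :
    childReach G G' P P' g h a b :=
  Relation.ReflTransGen.mono (fun _ _ hxy => Or.inl (Or.inl hxy)) _ _ hab

theorem childReach_of_reachWithin_om' {a b : V} (hab : G'.ReachWithin P'.Om a b) :
    childReach G G' P P' g h a b :=
  Relation.ReflTransGen.mono (fun _ _ hxy => Or.inl (Or.inr hxy)) _ _ hab

theorem childReach_fwd (f : Fwd G P) :
    childReach G G' P P' g h (f : V × V).1 (g f : V × V).2 :=
  .single (Or.inr (Or.inl ⟨f, rfl⟩))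

end Child

end IODGraph

theorem crossover_child_partially_informative_general {V : Type} (G G' : IODGraph V)
    (hG : PartiallyInformative G)
    (P : IOPartition G) (P' : IOPartition G')
    (hIC : InputContiguous G P) (hOC : OutputContiguous G' P')
    (g : Fwd G P ≃ Fwd G' P') (h : Bwd G' P' ≃ Bwd G P) :
    ∃ i ∈ G.I, ∃ o' ∈ G'.O, childReach G G' P P' g h i o' := by
  obtain ⟨f, hf⟩ := hG.fwd_nonempty P
  obtain ⟨i, hi, hi_f⟩ := hIC.exists_reachWithin hf.2.1
  obtain ⟨o', ho', hgf_o'⟩ := hOC.exists_reachWithin (g ⟨f, hf⟩).2.2.2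
  exact ⟨i, hi, o', ho', (childReach_of_reachWithin_psi hi_f).trans
    ((childReach_fwd ⟨f, hf⟩).trans (childReach_of_reachWithin_om' hgf_o'))⟩

/-- partially informative parents satisfying the no dangling
nodes condition, crossed over along an input-contiguous partition of the input
parent and an output-contiguous partition of the output parent, yield a
partially informative child. -/
theorem crossover_child_partially_informative {V : Type} (G G' : IODGraph V)
    (hG : PartiallyInformative G) (hG' : PartiallyInformative G')
    (hdG : NoDangling G) (hdG' : NoDangling G')
    (P : IOPartition G) (P' : IOPartition G')
    (hIC : InputContiguous G P) (hOC : OutputContiguous G' P')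
    (hc : CrossCompat G G' P P')
    (g : Fwd G P ≃ Fwd G' P') (h : Bwd G' P' ≃ Bwd G P) :
    ∃ i ∈ G.I, ∃ o' ∈ G'.O, childReach G G' P P' g h i o' :=
  crossover_child_partially_informative_general G G' hG P P' hIC hOC g h
end

section
/- There exist IOD graphs G and G', both fully informative and both satisfying the no dangling nodes condition, together with a contiguous IO partition (Ψ,Ω) of G and a contiguous IO partition (Ψ',Ω') of G' that are crossover compatible, and a crossover membrane, such that the resulting crossover child is not fully informative (some input i ∈ I and some output o' ∈ O' have no directed path from i to o' in the child). -/
open IODGraph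

/-! Take for both parents complete bipartite graphs from the inputs to the outputs, cut exactly
between inputs and outputs. Then neither part contributes an internal edge and there are no
backward links, so the child consists of the forward membrane alone, and every path in it is a
single membrane edge. If each input of `G` has only one forward link while `G'` has two outputs,
an input of the child reaches only one of them, whatever the membrane. -/

theorem Relation.ReflTransGen.eq_or_of_not_comp {α : Type*} {r : α → α → Prop} {a b : α}
    (hr : ∀ x y z, r x y → ¬ r y z) (hab : Relation.ReflTransGen r a b) : a = b ∨ r a b := by
  induction hab with
  | refl => exact .inl rfl
  | tail _ hcb ih =>
    rcases ih with rfl | hac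
    · exact .inr hcb
    · exact (hr _ _ _ hac hcb).elim

namespace IODGraph

variable {V : Type}

section Partition

variable {G : IODGraph V} (P : IOPartition G)

theorem bwd_eq_empty_of_psi_subset (hΨ : P.Psi ⊆ G.I) : Bwd G P = ∅ :=
  Set.eq_empty_of_forall_notMem fun e ⟨he, _, he₂⟩ => G.no_into_I e he (hΨ he₂)

theorem bwd_eq_empty_of_om_subset (hΩ : P.Om ⊆ G.O) : Bwd G P = ∅ :=
  Set.eq_empty_of_forall_notMem fun e ⟨he, he₁, _⟩ => G.no_outof_O e he (hΩ he₁)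

theorem inputContiguous_of_psi_subset (hΨ : P.Psi ⊆ G.I) : InputContiguous G P :=
  fun _ hn => (hn.2 (hΨ hn.1)).elim

theorem outputContiguous_of_om_subset (hΩ : P.Om ⊆ G.O) : OutputContiguous G P :=
  fun _ hn => (hn.2 (hΩ hn.1)).elim

end Partition

theorem noDangling_of_subset_union {G : IODGraph V} (hN : G.N ⊆ G.I ∪ G.O) : NoDangling G :=
  fun _ hn => (hn.2 (hN hn.1)).elim

section Crossover

variable {G G' : IODGraph V} {P : IOPartition G} {P' : IOPartition G'}

theorem CrossCompat.of_equiv (g : Fwd G P ≃ Fwd G' P') (h : Bwd G' P' ≃ Bwd G P)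
    (hΨΩ' : P.Psi ∩ P'.Om = ∅) (hΨ'Ω : P'.Psi ∩ P.Om = ∅)
    (hF : (Fwd G P).Finite) (hB : (Bwd G P).Finite) : CrossCompat G G' P P' :=
  have : Finite (Fwd G P) := hF
  have : Finite (Bwd G P) := hB
  { psi_om' := hΨΩ'
    psi'_om := hΨ'Ω
    finF := hF
    finF' := Finite.of_equiv _ g
    finB := hB
    finB' := Finite.of_equiv _ h.symm
    cardF := Set.ncard_congr' g
    cardB := (Set.ncard_congr' h).symm }

variable (g : Fwd G P ≃ Fwd G' P') (h : Bwd G' P' ≃ Bwd G P)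

theorem childEdges_eq_range_fwd (hΨ : P.Psi ⊆ G.I) (hΩ' : P'.Om ⊆ G'.O) :
    childEdges G G' P P' g h = Set.range fun f : Fwd G P => ((f : V × V).1, (g f : V × V).2) := by
  have hB' : IsEmpty (Bwd G' P') := by
    rw [bwd_eq_empty_of_om_subset P' hΩ']; infer_instance
  ext e
  simp only [childEdges, membraneEdges, Set.range_eq_empty, Set.union_empty, Set.mem_union,
    Set.mem_ofPred_eq, or_iff_right_iff_imp]
  rintro (⟨he, -, he₂⟩ | ⟨he, he₁, -⟩)
  · exact (G.no_into_I e he (hΨ he₂)).elim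
  · exact (G'.no_outof_O e he (hΩ' he₁)).elim

theorem eq_or_exists_fwd_of_childReach (hΨ : P.Psi ⊆ G.I) (hΩ' : P'.Om ⊆ G'.O)
    (hΨΩ' : P.Psi ∩ P'.Om = ∅) {a b : V} (hab : childReach G G' P P' g h a b) :
    a = b ∨ ∃ f : Fwd G P, (f : V × V).1 = a ∧ (g f : V × V).2 = b := by
  unfold childReach at hab
  rw [childEdges_eq_range_fwd g h hΨ hΩ'] at hab
  refine (hab.eq_or_of_not_comp ?_).imp_right fun ⟨f, hf⟩ => ⟨f, congrArg Prod.fst hf,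
    congrArg Prod.snd hf⟩
  -- no two membrane edges compose: they start in `Ψ` and end in `Ω'`
  rintro x y z ⟨f, hf⟩ ⟨f', hf'⟩
  have hgf : (g f : V × V).2 = y := congrArg Prod.snd hf
  have hf'₁ : (f' : V × V).1 = y := congrArg Prod.fst hf'
  have hyΩ' : y ∈ P'.Om := hgf ▸ (g f).2.2.2
  have hyΨ : y ∈ P.Psi := hf'₁ ▸ f'.2.2.1
  exact Set.eq_empty_iff_forall_notMem.1 hΨΩ' y ⟨hyΨ, hyΩ'⟩

end Crossover

section CompleteBipartite

def completeBipartite (I O : Set V) (hIO : Disjoint I O) : IODGraph V where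
  N := I ∪ O
  E := I ×ˢ O
  I := I
  O := O
  I_sub := Set.subset_union_left
  O_sub := Set.subset_union_right
  disjIO := hIO
  E_mem := fun _ he => ⟨.inl he.1, .inr he.2⟩
  no_into_I := fun _ he hI => hIO.notMem_of_mem_right he.2 hI
  no_outof_O := fun _ he hO => hIO.notMem_of_mem_left he.1 hO

variable (I O : Set V) (hIO : Disjoint I O)

def completeBipartite.ioPartition : IOPartition (completeBipartite I O hIO) where
  Psi := I
  Om := O
  union_eq := rfl
  disj := hIO
  I_sub := subset_rfl
  O_sub := subset_rfl

theorem completeBipartite.fwd_ioPartition :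
    Fwd (completeBipartite I O hIO) (completeBipartite.ioPartition I O hIO) = I ×ˢ O :=
  Set.ext fun _ => ⟨fun he => he.1, fun he => ⟨he, he⟩⟩

theorem completeBipartite.bwd_ioPartition :
    Bwd (completeBipartite I O hIO) (completeBipartite.ioPartition I O hIO) = ∅ :=
  bwd_eq_empty_of_psi_subset _ subset_rfl

theorem completeBipartite.fullyInformative : FullyInformative (completeBipartite I O hIO) :=
  fun _ hi _ ho => .single ⟨hi, ho⟩

theorem completeBipartite.noDangling : NoDangling (completeBipartite I O hIO) :=
  noDangling_of_subset_union subset_rfl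

variable {I O} {I' O' : Set V} {hIO} {hI'O' : Disjoint I' O'}

def completeBipartite.fwdEquiv (e : ↥(I ×ˢ O) ≃ ↥(I' ×ˢ O')) :
    Fwd (completeBipartite I O hIO) (completeBipartite.ioPartition I O hIO) ≃
      Fwd (completeBipartite I' O' hI'O') (completeBipartite.ioPartition I' O' hI'O') :=
  (Equiv.setCongr (fwd_ioPartition I O hIO)).trans
    (e.trans (Equiv.setCongr (fwd_ioPartition I' O' hI'O')).symm)

def completeBipartite.bwdEquiv :
    Bwd (completeBipartite I O hIO) (completeBipartite.ioPartition I O hIO) ≃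
      Bwd (completeBipartite I' O' hI'O') (completeBipartite.ioPartition I' O' hI'O') :=
  Equiv.setCongr <| by rw [bwd_ioPartition, bwd_ioPartition]

theorem completeBipartite.crossCompat (e : ↥(I ×ˢ O) ≃ ↥(I' ×ˢ O')) (hIO' : Disjoint I O')
    (hI'O : Disjoint I' O) (hfin : (I ×ˢ O).Finite) :
    CrossCompat (completeBipartite I O hIO) (completeBipartite I' O' hI'O')
      (completeBipartite.ioPartition I O hIO) (completeBipartite.ioPartition I' O' hI'O') :=
  .of_equiv (fwdEquiv e) bwdEquiv hIO'.inter_eq hI'O.inter_eq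
    (fwd_ioPartition I O hIO ▸ hfin)
    (bwd_ioPartition I O hIO ▸ Set.finite_empty)

theorem completeBipartite.eq_or_exists_of_childReach (e : ↥(I ×ˢ O) ≃ ↥(I' ×ˢ O'))
    (hIO' : Disjoint I O') {a b : V}
    (hab : childReach (completeBipartite I O hIO) (completeBipartite I' O' hI'O')
      (completeBipartite.ioPartition I O hIO) (completeBipartite.ioPartition I' O' hI'O')
      (fwdEquiv e) bwdEquiv a b) :
    a = b ∨ ∃ p : ↥(I ×ˢ O), (p : V × V).1 = a ∧ (e p : V × V).2 = b := by
  refine (eq_or_exists_fwd_of_childReach _ _ subset_rfl subset_rfl hIO'.inter_eq hab).imp_right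
    ?_
  rintro ⟨⟨f, hf⟩, rfl, rfl⟩
  exact ⟨⟨f, hf.1⟩, rfl, rfl⟩

end CompleteBipartite

end IODGraph

def linkEquiv : ↥(({0, 1} : Set ℕ) ×ˢ ({2} : Set ℕ)) ≃
    ↥(({3} : Set ℕ) ×ˢ ({4, 5} : Set ℕ)) where
  toFun p := ⟨(3, p.1.1 + 4), by
    obtain ⟨⟨a, b⟩, ha, -⟩ := p
    simp only [Set.mem_insert_iff, Set.mem_singleton_iff, Set.mem_prod, Nat.add_eq_right,
      Nat.reduceEqDiff, true_and] at ha ⊢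
    omega⟩
  invFun p := ⟨(p.1.2 - 4, 2), by
    obtain ⟨⟨a, b⟩, -, hb⟩ := p
    simp only [Set.mem_insert_iff, Set.mem_singleton_iff, Set.mem_prod, and_true] at hb ⊢
    omega⟩
  left_inv := by
    rintro ⟨⟨a, b⟩, -, rfl : b = 2⟩
    exact Subtype.ext <| Prod.ext (show a + 4 - 4 = a by omega) rfl
  right_inv := by
    rintro ⟨⟨a, b⟩, rfl : a = 3, hb⟩
    simp only [Set.mem_insert_iff, Set.mem_singleton_iff] at hb
    exact Subtype.ext <| Prod.ext rfl (show b - 4 + 4 = b by omega)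

/-- full informativeness need not be preserved: there are fully
informative parents satisfying the no dangling nodes condition, with
contiguous, crossover compatible IO partitions and a crossover membrane,
whose crossover child is not fully informative. -/
theorem full_informativeness_not_preserved :
    ∃ (V : Type) (G G' : IODGraph V) (P : IOPartition G) (P' : IOPartition G')
      (g : Fwd G P ≃ Fwd G' P') (h : Bwd G' P' ≃ Bwd G P),
      FullyInformative G ∧ FullyInformative G' ∧
      NoDangling G ∧ NoDangling G' ∧
      InputContiguous G P ∧ OutputContiguous G P ∧
      InputContiguous G' P' ∧ OutputContiguous G' P' ∧
      CrossCompat G G' P P' ∧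
      (∃ i ∈ G.I, ∃ o' ∈ G'.O, ¬ childReach G G' P P' g h i o') := by
  have hIO : Disjoint ({0, 1} : Set ℕ) {2} := by simp
  have hI'O' : Disjoint ({3} : Set ℕ) {4, 5} := by simp
  refine ⟨ℕ, completeBipartite _ _ hIO, completeBipartite _ _ hI'O',
    completeBipartite.ioPartition _ _ _, completeBipartite.ioPartition _ _ _,
    completeBipartite.fwdEquiv linkEquiv,
    completeBipartite.bwdEquiv, completeBipartite.fullyInformative _ _ _,
    completeBipartite.fullyInformative _ _ _, completeBipartite.noDangling _ _ _,
    completeBipartite.noDangling _ _ _, inputContiguous_of_psi_subset _ subset_rfl,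
    outputContiguous_of_om_subset _ subset_rfl, inputContiguous_of_psi_subset _ subset_rfl,
    outputContiguous_of_om_subset _ subset_rfl,
    completeBipartite.crossCompat linkEquiv (by simp) (by simp)
      ((Set.toFinite _).prod (Set.toFinite _)),
    0, .inl rfl, 5, .inr rfl, fun h05 => ?_⟩
  rcases completeBipartite.eq_or_exists_of_childReach linkEquiv (by simp) h05
    with h05 | ⟨p, hp, hgp⟩
  · omega
  · have : (p : ℕ × ℕ).1 + 4 = 5 := hgp
    omega
end
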